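/- arXiv:1802.09598 — 3 statements merged into one kernel-verified Lean document; each statement's English description precedes it below -/
import Mathlib

section
/- For all positive integers i and j and all continuous functions f, g : [0,1] → ℝ, one has ∫₀¹ (q·f(q) + (1−q)·g(q)) dβ_{i,j}(q) = (i/(i+j))·∫₀¹ f(q) dβ_{i+1,j}(q) + (j/(i+j))·∫₀¹ g(q) dβ_{i,j+1}(q). (This is the conjugate-prior relationship between the Beta and Bernoulli distributions, the conjugacy axiom of the Beta-Bernoulli theory.) -/
/-!
Writing `b_{i,j}` for the Beta density, the recursion `B(i+1,j) = i/(i+j) · B(i,j)` gives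
`q · b_{i,j}(q) = i/(i+j) · b_{i+1,j}(q)` and `(1-q) · b_{i,j}(q) = j/(i+j) · b_{i,j+1}(q)`.
Splitting the left-hand integral in two (both parts are integrable since `f`, `g` are continuous
on `[0,1]`) and substituting these identities under the integral sign gives the result.
-/

open MeasureTheory

/-- The normalizing constant `B(i,j) = (i-1)!(j-1)!/(i+j-1)!` of the Beta distribution. -/
noncomputable def betaB (i j : ℕ) : ℝ :=
  (((i - 1).factorial : ℝ) * ((j - 1).factorial : ℝ)) / ((i + j - 1).factorial : ℝ)

/-- The Beta(i,j) probability measure on `[0,1] ⊆ ℝ`, given by the density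
`p ↦ p^(i-1) (1-p)^(j-1) / B(i,j)` with respect to Lebesgue measure on `[0,1]`. -/
noncomputable def betaMeasure (i j : ℕ) : Measure ℝ :=
  (volume.restrict (Set.Icc (0:ℝ) 1)).withDensity
    (fun p => ENNReal.ofReal (p ^ (i - 1) * (1 - p) ^ (j - 1) / betaB i j))

open Set

section WithDensityOfReal

variable {α : Type*} [MeasurableSpace α] {μ : Measure α} {s : Set α} {d : α → ℝ}

lemma integral_restrict_withDensity_ofReal (hs : MeasurableSet s) (hd : Measurable d)
    (hd_nonneg : ∀ x ∈ s, 0 ≤ d x) (g : α → ℝ) :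
    ∫ x, g x ∂(μ.restrict s).withDensity (fun x => ENNReal.ofReal (d x))
      = ∫ x in s, d x * g x ∂μ := by
  rw [integral_withDensity_eq_integral_toReal_smul hd.ennreal_ofReal
    (ae_of_all _ fun _ => ENNReal.ofReal_lt_top)]
  refine setIntegral_congr_fun hs fun x hx => ?_
  rw [ENNReal.toReal_ofReal (hd_nonneg x hx), smul_eq_mul]

lemma integrable_restrict_withDensity_ofReal_iff (hs : MeasurableSet s) (hd : Measurable d)
    (hd_nonneg : ∀ x ∈ s, 0 ≤ d x) {g : α → ℝ} :
    Integrable g ((μ.restrict s).withDensity (fun x => ENNReal.ofReal (d x)))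
      ↔ IntegrableOn (fun x => d x * g x) s μ := by
  rw [integrable_withDensity_iff_integrable_smul' hd.ennreal_ofReal
    (ae_of_all _ fun _ => ENNReal.ofReal_lt_top)]
  refine integrable_congr ((ae_restrict_iff' hs).2 (ae_of_all _ fun x hx => ?_))
  dsimp only
  rw [ENNReal.toReal_ofReal (hd_nonneg x hx), smul_eq_mul]

end WithDensityOfReal

lemma betaB_pos (i j : ℕ) : 0 < betaB i j := by
  unfold betaB
  positivity

lemma betaB_add_one_left {i j : ℕ} (hi : 1 ≤ i) (hj : 1 ≤ j) :
    betaB (i + 1) j = (i / (i + j) : ℝ) * betaB i j := by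
  obtain ⟨i, rfl⟩ := Nat.exists_eq_add_of_le' hi
  obtain ⟨j, rfl⟩ := Nat.exists_eq_add_of_le' hj
  simp only [betaB, Nat.add_sub_cancel, show i + 1 + 1 + (j + 1) - 1 = i + j + 1 + 1 by omega,
    show i + 1 + (j + 1) - 1 = i + j + 1 by omega, Nat.factorial_succ]
  field_simp
  push_cast
  ring

lemma betaB_add_one_right {i j : ℕ} (hi : 1 ≤ i) (hj : 1 ≤ j) :
    betaB i (j + 1) = (j / (i + j) : ℝ) * betaB i j := by
  obtain ⟨i, rfl⟩ := Nat.exists_eq_add_of_le' hi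
  obtain ⟨j, rfl⟩ := Nat.exists_eq_add_of_le' hj
  simp only [betaB, Nat.add_sub_cancel, show i + 1 + (j + 1 + 1) - 1 = i + j + 1 + 1 by omega,
    show i + 1 + (j + 1) - 1 = i + j + 1 by omega, Nat.factorial_succ]
  field_simp
  push_cast
  ring

noncomputable def betaDensity (i j : ℕ) (p : ℝ) : ℝ :=
  p ^ (i - 1) * (1 - p) ^ (j - 1) / betaB i j

lemma continuous_betaDensity (i j : ℕ) : Continuous (betaDensity i j) := by
  unfold betaDensity
  fun_prop

lemma betaDensity_nonneg (i j : ℕ) {p : ℝ} (hp : p ∈ Icc (0 : ℝ) 1) : 0 ≤ betaDensity i j p :=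
  div_nonneg (mul_nonneg (pow_nonneg hp.1 _) (pow_nonneg (sub_nonneg.2 hp.2) _))
    (betaB_pos i j).le

lemma betaDensity_mul_self {i j : ℕ} (hi : 1 ≤ i) (hj : 1 ≤ j) (p : ℝ) :
    betaDensity i j p * p = (i / (i + j) : ℝ) * betaDensity (i + 1) j p := by
  rw [betaDensity, betaDensity, betaB_add_one_left hi hj]
  obtain ⟨i, rfl⟩ := Nat.exists_eq_add_of_le' hi
  simp only [Nat.add_sub_cancel]
  field_simp [(betaB_pos (i + 1) j).ne']
  ring

lemma betaDensity_mul_one_sub {i j : ℕ} (hi : 1 ≤ i) (hj : 1 ≤ j) (p : ℝ) :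
    betaDensity i j p * (1 - p) = (j / (i + j) : ℝ) * betaDensity i (j + 1) p := by
  rw [betaDensity, betaDensity, betaB_add_one_right hi hj]
  obtain ⟨j, rfl⟩ := Nat.exists_eq_add_of_le' hj
  simp only [Nat.add_sub_cancel]
  field_simp [(betaB_pos i (j + 1)).ne']
  ring

lemma integral_betaMeasure (i j : ℕ) (h : ℝ → ℝ) :
    ∫ q, h q ∂betaMeasure i j = ∫ q in Icc 0 1, betaDensity i j q * h q :=
  integral_restrict_withDensity_ofReal measurableSet_Icc (continuous_betaDensity i j).measurable
    (fun _ => betaDensity_nonneg i j) h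

lemma ContinuousOn.integrable_betaMeasure {h : ℝ → ℝ} (hh : ContinuousOn h (Icc 0 1))
    (i j : ℕ) : Integrable h (betaMeasure i j) :=
  (integrable_restrict_withDensity_ofReal_iff measurableSet_Icc
    (continuous_betaDensity i j).measurable (fun _ => betaDensity_nonneg i j)).2
    (((continuous_betaDensity i j).continuousOn.mul hh).integrableOn_Icc)

lemma integral_mul_betaMeasure {i j : ℕ} (hi : 1 ≤ i) (hj : 1 ≤ j) (f : ℝ → ℝ) :
    ∫ q, q * f q ∂betaMeasure i j = (i / (i + j) : ℝ) * ∫ q, f q ∂betaMeasure (i + 1) j := by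
  rw [integral_betaMeasure, integral_betaMeasure, ← integral_const_mul]
  refine setIntegral_congr_fun measurableSet_Icc fun q _ => ?_
  rw [← mul_assoc, betaDensity_mul_self hi hj, mul_assoc]

lemma integral_one_sub_mul_betaMeasure {i j : ℕ} (hi : 1 ≤ i) (hj : 1 ≤ j) (g : ℝ → ℝ) :
    ∫ q, (1 - q) * g q ∂betaMeasure i j
      = (j / (i + j) : ℝ) * ∫ q, g q ∂betaMeasure i (j + 1) := by
  rw [integral_betaMeasure, integral_betaMeasure, ← integral_const_mul]
  refine setIntegral_congr_fun measurableSet_Icc fun q _ => ?_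
  rw [← mul_assoc, betaDensity_mul_one_sub hi hj, mul_assoc]

/-- Conjugacy: `∫ (q f(q) + (1-q) g(q)) dβ_{i,j} = i/(i+j) ∫ f dβ_{i+1,j} + j/(i+j) ∫ g dβ_{i,j+1}`. -/
theorem beta_bernoulli_conjugacy (i j : ℕ) (hi : 1 ≤ i) (hj : 1 ≤ j)
    (f g : ℝ → ℝ) (hf : ContinuousOn f (Set.Icc 0 1)) (hg : ContinuousOn g (Set.Icc 0 1)) :
    ∫ q, (q * f q + (1 - q) * g q) ∂(betaMeasure i j)
      = ((i : ℝ) / ((i : ℝ) + j)) * ∫ q, f q ∂(betaMeasure (i + 1) j)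
        + ((j : ℝ) / ((i : ℝ) + j)) * ∫ q, g q ∂(betaMeasure i (j + 1)) := by
  have hf' : Integrable (fun q => q * f q) (betaMeasure i j) :=
    (continuousOn_id.mul hf).integrable_betaMeasure i j
  have hg' : Integrable (fun q => (1 - q) * g q) (betaMeasure i j) :=
    ((continuousOn_const.sub continuousOn_id).mul hg).integrable_betaMeasure i j
  rw [integral_add hf' hg', integral_mul_betaMeasure hi hj, integral_one_sub_mul_betaMeasure hi hj]
end

section
/- Fix integers n ≥ 2 and d ≥ 1. The product Beta measures on [0,1]^d with common parameter sum n are linearly independent: if for each tuple I = (i_1,…,i_d) ∈ {1,…,n−1}^d we write μ_I = β_{i_1,n−i_1} ⊗ ⋯ ⊗ β_{i_d,n−i_d} (the product measure on [0,1]^d), and real numbers (a_I) satisfy Σ_I a_I·∫ f dμ_I = 0 for every continuous f : [0,1]^d → ℝ, then a_I = 0 for every I. -/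
/-!
The `k`-th moment of `β_{i,n-i}` is `i^(k) / n^(k)` (rising factorials). For fixed `n` the moment
matrix `(i^(k) / n^(k))` with `1 ≤ i ≤ n-1`, `0 ≤ k < n-1` is therefore a Vandermonde matrix in the
distinct nodes `i`, up to monic changes of polynomial basis and column scaling, hence invertible.
Its inverse yields polynomials `q_j` with `∫ q_j dβ_{i,n-i} = δ_{ij}`, and by Fubini the test
function `p ↦ ∏_t q_{J_t}(p_t)` integrates to `δ_{IJ}` against `μ_I`, isolating the coefficient
`a_J`.
-/

open MeasureTheory

open Polynomial
open scoped Nat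

lemma integral_pow_mul_one_sub_pow_succ (a b : ℕ) :
    ∫ x in (0:ℝ)..1, x ^ a * (1 - x) ^ (b + 1)
      = (b + 1) / (a + 1) * ∫ x in (0:ℝ)..1, x ^ (a + 1) * (1 - x) ^ b := by
  have hu : ∀ x ∈ Set.uIcc (0:ℝ) 1,
      HasDerivAt (fun y : ℝ => (1 - y) ^ (b + 1)) (-((b + 1) * (1 - x) ^ b)) x := fun x _ => by
    simpa using ((hasDerivAt_id x).const_sub 1).fun_pow (b + 1)
  have hv : ∀ x ∈ Set.uIcc (0:ℝ) 1,
      HasDerivAt (fun y : ℝ => y ^ (a + 1) / (a + 1)) (x ^ a) x := fun x _ =>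
    ((hasDerivAt_pow (a + 1) x).div_const ((a:ℝ) + 1)).congr_deriv (by push_cast; field_simp)
  have parts := intervalIntegral.integral_mul_deriv_eq_deriv_mul hu hv
    ((by fun_prop : Continuous fun x : ℝ => -((b + 1 : ℝ) * (1 - x) ^ b)).intervalIntegrable _ _)
    ((continuous_pow a).intervalIntegrable _ _)
  simp only [sub_self, sub_zero, ne_eq, Nat.add_one_ne_zero, not_false_eq_true, zero_pow,
    one_pow, zero_mul, zero_div, mul_zero, neg_mul, intervalIntegral.integral_neg, zero_sub,
    neg_neg] at parts
  rw [← intervalIntegral.integral_const_mul]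
  simp_rw [mul_comm (_ ^ a), parts]
  congr 1 with x
  ring

lemma integral_pow_mul_one_sub_pow (a b : ℕ) :
    ∫ x in (0:ℝ)..1, x ^ a * (1 - x) ^ b = a ! * b ! / (a + b + 1)! := by
  induction b generalizing a with
  | zero =>
    simp only [pow_zero, mul_one, integral_pow, one_pow, zero_pow (Nat.add_one_ne_zero a),
      sub_zero, Nat.factorial_zero, add_zero, Nat.factorial_succ]
    push_cast
    field_simp
  | succ b ih =>
    rw [integral_pow_mul_one_sub_pow_succ, ih, show a + 1 + b + 1 = a + (b + 1) + 1 by ring]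
    push_cast [Nat.factorial_succ]
    field_simp

section betaMeasure

variable (i j : ℕ)

lemma continuous_betaDensity_s4 :
    Continuous fun p : ℝ => p ^ (i - 1) * (1 - p) ^ (j - 1) / betaB i j := by
  fun_prop

instance : IsFiniteMeasure (betaMeasure i j) :=
  isFiniteMeasure_withDensity_ofReal (continuous_betaDensity_s4 i j).integrableOn_Icc.2

lemma integrable_betaMeasure {g : ℝ → ℝ} (hg : Continuous g) : Integrable g (betaMeasure i j) := by
  rw [betaMeasure, integrable_withDensity_iff (by fun_prop) (by simp)]
  simp only [ENNReal.toReal_ofReal']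
  exact (hg.mul ((continuous_betaDensity_s4 i j).max continuous_const)).integrableOn_Icc

lemma integral_betaMeasure_s4 (g : ℝ → ℝ) :
    ∫ x, g x ∂betaMeasure i j
      = (betaB i j)⁻¹ * ∫ x in (0:ℝ)..1, g x * (x ^ (i - 1) * (1 - x) ^ (j - 1)) := by
  rw [betaMeasure, integral_withDensity_eq_integral_toReal_smul (by fun_prop) (by simp),
    intervalIntegral.integral_of_le zero_le_one, ← integral_Icc_eq_integral_Ioc,
    ← integral_const_mul]
  refine setIntegral_congr_fun measurableSet_Icc fun x ⟨hx0, hx1⟩ => ?_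
  have hdensity : 0 ≤ x ^ (i - 1) * (1 - x) ^ (j - 1) / betaB i j := by
    have : 0 ≤ betaB i j := by unfold betaB; positivity
    have : 0 ≤ 1 - x := by linarith
    positivity
  rw [smul_eq_mul, ENNReal.toReal_ofReal hdensity]
  ring

end betaMeasure

lemma integral_pow_betaMeasure (k : ℕ) {i j : ℕ} (hi : 1 ≤ i) (hj : 1 ≤ j) :
    ∫ x, x ^ k ∂betaMeasure i j = i.ascFactorial k / (i + j).ascFactorial k := by
  obtain ⟨i, rfl⟩ := Nat.exists_eq_add_of_le' hi
  obtain ⟨j, rfl⟩ := Nat.exists_eq_add_of_le' hj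
  have hsum : i + 1 + (j + 1) - 1 = i + j + 1 := by omega
  have hi_asc := Nat.factorial_mul_ascFactorial i k
  have hij_asc := Nat.factorial_mul_ascFactorial (i + j + 1) k
  rw [integral_betaMeasure_s4]
  simp_rw [Nat.add_sub_cancel, ← mul_assoc, ← pow_add]
  rw [integral_pow_mul_one_sub_pow, betaB, hsum, show k + i + j + 1 = i + j + 1 + k by ring,
    ← hij_asc, show k + i = i + k by ring, ← hi_asc, show i + j + 1 + 1 = i + 1 + (j + 1) by ring]
  push_cast
  field_simp

noncomputable def momentMatrix {m : ℕ} (ν : Fin m → Measure ℝ) : Matrix (Fin m) (Fin m) ℝ :=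
  Matrix.of fun i k => ∫ x, x ^ (k : ℕ) ∂ν i

lemma exists_polynomial_integral_eq_one_apply_of_isUnit_momentMatrix {m : ℕ} (ν : Fin m → Measure ℝ)
    (hpow : ∀ i (k : ℕ), Integrable (fun x => x ^ k) (ν i)) (hM : IsUnit (momentMatrix ν)) :
    ∃ q : Fin m → ℝ[X], ∀ i j, ∫ x, (q j).eval x ∂ν i = (1 : Matrix (Fin m) (Fin m) ℝ) i j := by
  refine ⟨fun j => ∑ k, C ((momentMatrix ν)⁻¹ k j) * X ^ (k : ℕ), fun i j => ?_⟩
  simp only [eval_finsetSum, eval_mul, eval_C, eval_pow, eval_X]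
  rw [integral_finsetSum _ fun (k : Fin m) _ => (hpow i k).const_mul ((momentMatrix ν)⁻¹ k j),
    ← Matrix.mul_nonsing_inv _ ((Matrix.isUnit_iff_isUnit_det _).1 hM), Matrix.mul_apply]
  refine Finset.sum_congr rfl fun k _ => ?_
  rw [integral_const_mul, mul_comm]
  rfl

lemma isUnit_momentMatrix_betaMeasure (m : ℕ) :
    IsUnit (momentMatrix fun i : Fin m => betaMeasure (i + 1) (m - i)) := by
  have hfactor : momentMatrix (fun i : Fin m => betaMeasure (i + 1) (m - i))
      = Matrix.of (fun i k : Fin m => (ascPochhammer ℝ k).eval ((i + 1 : ℕ) : ℝ))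
        * Matrix.diagonal fun k : Fin m => ((m + 1).ascFactorial k : ℝ)⁻¹ := by
    ext i k
    rw [momentMatrix, Matrix.of_apply, integral_pow_betaMeasure _ (by omega) (by omega),
      Matrix.mul_diagonal, Matrix.of_apply, ascPochhammer_nat_eq_natCast_ascFactorial,
      show i + 1 + (m - i) = m + 1 by omega, div_eq_mul_inv]
  have hdet :
      (Matrix.of fun i k : Fin m => (ascPochhammer ℝ k).eval ((i + 1 : ℕ) : ℝ)).det ≠ 0 := by
    rw [← Matrix.det_eval_matrixOfPolynomials_eq_det_vandermonde _ _
      (fun k => ascPochhammer_natDegree ℝ k) (fun k => monic_ascPochhammer ℝ k),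
      Matrix.det_vandermonde_ne_zero_iff]
    intro i i' h
    simpa [Fin.ext_iff] using h
  rw [hfactor]
  refine ((Matrix.isUnit_iff_isUnit_det _).2 hdet.isUnit).mul (Matrix.isUnit_diagonal.2 ?_)
  exact Pi.isUnit_iff.2 fun k => (by positivity : ((m + 1).ascFactorial k : ℝ)⁻¹ ≠ 0).isUnit

lemma exists_polynomial_integral_betaMeasure_eq_ite (n : ℕ) :
    ∃ q : ℕ → ℝ[X], ∀ i ∈ Finset.Icc 1 (n - 1), ∀ j ∈ Finset.Icc 1 (n - 1),
      ∫ x, (q j).eval x ∂betaMeasure i (n - i) = if i = j then 1 else 0 := by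
  obtain ⟨Q, hQ⟩ := exists_polynomial_integral_eq_one_apply_of_isUnit_momentMatrix _
    (fun i k => integrable_betaMeasure _ _ (continuous_pow k))
    (isUnit_momentMatrix_betaMeasure (n - 1))
  refine ⟨fun j => if h : j - 1 < n - 1 then Q ⟨j - 1, h⟩ else 0, fun i hi j hj => ?_⟩
  rw [Finset.mem_Icc] at hi hj
  have hij := hQ ⟨i - 1, by omega⟩ ⟨j - 1, by omega⟩
  simp only [Matrix.one_apply, Fin.mk.injEq, show i - 1 + 1 = i by omega,
    show n - 1 - (i - 1) = n - i by omega] at hij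
  beta_reduce
  rw [dif_pos (by omega), hij]
  exact if_congr (by omega) rfl rfl

lemma integral_pi_prod_eq_ite {ι κ : Type*} [Fintype ι] [DecidableEq κ] {s : Set κ}
    (ν : κ → Measure ℝ) [∀ k, SigmaFinite (ν k)] (q : κ → ℝ → ℝ)
    (hq : ∀ i ∈ s, ∀ j ∈ s, ∫ x, q j x ∂ν i = if i = j then 1 else 0)
    {I J : ι → κ} (hI : ∀ t, I t ∈ s) (hJ : ∀ t, J t ∈ s) :
    ∫ p, ∏ t, q (J t) (p t) ∂Measure.pi (fun t => ν (I t)) = if I = J then 1 else 0 := by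
  rw [integral_fintype_prod_eq_prod, Finset.prod_congr rfl fun t _ => hq _ (hI t) _ (hJ t),
    Fintype.prod_boole]
  exact if_congr funext_iff.symm rfl rfl

theorem betaMeasure_pi_linearIndependent_general (n d : ℕ)
    (a : (Fin d → ℕ) → ℝ)
    (h : ∀ f : (Fin d → ℝ) → ℝ, ContinuousOn f (Set.Icc 0 1) →
      ∑ I ∈ Fintype.piFinset (fun _ : Fin d => Finset.Icc 1 (n - 1)),
        a I * ∫ p, f p ∂(Measure.pi (fun t => betaMeasure (I t) (n - I t))) = 0) :
    ∀ I ∈ Fintype.piFinset (fun _ : Fin d => Finset.Icc 1 (n - 1)), a I = 0 := by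
  intro J hJ
  obtain ⟨q, hq⟩ := exists_polynomial_integral_betaMeasure_eq_ite n
  have hdual : ∀ I ∈ Fintype.piFinset (fun _ : Fin d => Finset.Icc 1 (n - 1)),
      ∫ p, ∏ t, (q (J t)).eval (p t) ∂Measure.pi (fun t => betaMeasure (I t) (n - I t))
        = if I = J then 1 else 0 := fun I hI =>
    integral_pi_prod_eq_ite (fun i => betaMeasure i (n - i)) (fun j x => (q j).eval x) hq
      (Fintype.mem_piFinset.1 hI) (Fintype.mem_piFinset.1 hJ)
  have hF := h (fun p => ∏ t, (q (J t)).eval (p t)) (by fun_prop)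
  rwa [Finset.sum_congr rfl fun I hI => by rw [hdual I hI, mul_ite, mul_one, mul_zero],
    Finset.sum_ite_eq', if_pos hJ] at hF

/-- Products of Beta measures with common parameter sum `n` are linearly independent. -/
theorem betaMeasure_pi_linearIndependent (n d : ℕ) (hn : 2 ≤ n) (hd : 1 ≤ d)
    (a : (Fin d → ℕ) → ℝ)
    (h : ∀ f : (Fin d → ℝ) → ℝ, ContinuousOn f (Set.Icc 0 1) →
      ∑ I ∈ Fintype.piFinset (fun _ : Fin d => Finset.Icc 1 (n - 1)),
        a I * ∫ p, f p ∂(Measure.pi (fun t => betaMeasure (I t) (n - I t))) = 0) :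
    ∀ I ∈ Fintype.piFinset (fun _ : Fin d => Finset.Icc 1 (n - 1)), a I = 0 :=
  betaMeasure_pi_linearIndependent_general n d a h
end

section
/- Let f : ℝ^d → ℝ^m and g : ℝ^d → ℝ^m be injective affine maps with distinct ranges, and let μ and ν be finite Borel measures on ℝ^d that are absolutely continuous with respect to Lebesgue measure. Then the pushforward measures f_*μ and g_*ν on ℝ^m are mutually singular. -/
open MeasureTheory

lemma aux_pushforward_singular (d m : ℕ)
    (f g : (Fin d → ℝ) →ᵃ[ℝ] (Fin m → ℝ))
    (h : ¬ Set.range f ⊆ Set.range g)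
    (μ ν : Measure (Fin d → ℝ)) (hμ : μ ≪ volume) :
    (μ.map f).MutuallySingular (ν.map g) := by
  have hfc : Continuous f := f.continuous_of_finiteDimensional
  have hgc : Continuous g := g.continuous_of_finiteDimensional
  set S : AffineSubspace ℝ (Fin m → ℝ) := (⊤ : AffineSubspace ℝ (Fin d → ℝ)).map g with hS
  have hSrange : (S : Set (Fin m → ℝ)) = Set.range g := by
    rw [hS, AffineSubspace.coe_map, AffineSubspace.top_coe, Set.image_univ]
  have hSmeas : MeasurableSet (S : Set (Fin m → ℝ)) :=
    S.closed_of_finiteDimensional.measurableSet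
  refine ⟨(S : Set (Fin m → ℝ)), hSmeas, ?_, ?_⟩
  · rw [Measure.map_apply hfc.measurable hSmeas]
    have hpre : f ⁻¹' (S : Set (Fin m → ℝ)) = ((S.comap f : AffineSubspace ℝ (Fin d → ℝ)) : Set (Fin d → ℝ)) := by
      rw [AffineSubspace.coe_comap]
    rw [hpre]
    refine hμ ?_
    refine Measure.addHaar_affineSubspace _ _ ?_
    intro htop
    obtain ⟨x, ⟨a, rfl⟩, hx⟩ := Set.not_subset.mp h
    have : a ∈ S.comap f := htop ▸ AffineSubspace.mem_top ℝ _ a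
    rw [AffineSubspace.mem_comap] at this
    exact hx (hSrange ▸ this)
  · rw [Measure.map_apply hgc.measurable hSmeas.compl]
    have : g ⁻¹' (S : Set (Fin m → ℝ))ᶜ = ∅ := by
      ext a
      simp [hSrange]
    simp [this]

/-- Pushforwards along injective affine maps with distinct ranges, of finite measures absolutely
continuous with respect to Lebesgue measure, are mutually singular. -/
theorem pushforward_affine_mutuallySingular (d m : ℕ)
    (f g : (Fin d → ℝ) →ᵃ[ℝ] (Fin m → ℝ))
    (hf : Function.Injective f) (hg : Function.Injective g)
    (hrange : Set.range f ≠ Set.range g)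
    (μ ν : Measure (Fin d → ℝ)) (hμfin : IsFiniteMeasure μ) (hνfin : IsFiniteMeasure ν)
    (hμ : μ ≪ volume) (hν : ν ≪ volume) :
    (μ.map f).MutuallySingular (ν.map g) := by
  by_cases h : Set.range f ⊆ Set.range g
  · have h' : ¬ Set.range g ⊆ Set.range f := fun h'' => hrange (h.antisymm h'')
    exact (aux_pushforward_singular d m g f h' ν μ hν).symm
  · exact aux_pushforward_singular d m f g h μ ν hμ
end
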